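/- (Repair of a sub-reverse fan, Section 4.) Let φ be a proper partial edge coloring of a finite simple graph G with color set C. Let w be a vertex and let x, y be two distinct neighbors of w such that the edges wx and wy are both uncolored. Let α, β ∈ C be distinct colors with α ∈ M(x) ∩ M(y), α ∉ M(w), and β ∈ M(w). Let P_w be the αβ-alternating path starting at w (it exists and has w as an endpoint since w is incident to an α-colored edge but to no β-colored edge). Let φ' be obtained from φ by augmenting P_w and then coloring wx with α if P_w does not end at x, and coloring wy with α otherwise. Then φ' is a proper partial edge coloring whose set of colored edges is the set of colored edges of φ together with exactly one of wx, wy; in particular, in φ' the color α is not missing at w (so any other uncolored edges at w whose repair requires α ∉ M(w) are not destroyed). -/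

import Mathlib

/-- A proper partial edge coloring of `G` with color set `C`. -/
def IsProperPartialEC {V : Type*} (G : SimpleGraph V) (C : Set ℕ)
    (φ : Sym2 V → Option ℕ) : Prop :=
  (∀ e : Sym2 V, φ e ≠ none → e ∈ G.edgeSet) ∧
  (∀ (e : Sym2 V) (c : ℕ), φ e = some c → c ∈ C) ∧
  (∀ e₁ e₂ : Sym2 V, e₁ ≠ e₂ → (∃ x : V, x ∈ e₁ ∧ x ∈ e₂) →
    ∀ c : ℕ, φ e₁ = some c → φ e₂ ≠ some c)

/-- `missingColors G C φ x` is the set `M(x)` of colors of `C` not assigned by `φ`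
to any edge of `G` incident to `x`. -/
def missingColors {V : Type*} (G : SimpleGraph V) (C : Set ℕ)
    (φ : Sym2 V → Option ℕ) (x : V) : Set ℕ :=
  {c | c ∈ C ∧ ∀ e ∈ G.edgeSet, x ∈ e → φ e ≠ some c}

/-- A maximal `αβ`-alternating path. -/
def IsMaxAltPath {V : Type*} (G : SimpleGraph V) (φ : Sym2 V → Option ℕ)
    (α β : ℕ) {u v : V} (p : G.Walk u v) : Prop :=
  p.IsPath ∧
  (∀ e ∈ p.edges, φ e = some α ∨ φ e = some β) ∧
  List.Chain' (fun e₁ e₂ => φ e₁ ≠ φ e₂) p.edges ∧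
  (∀ e ∈ G.edgeSet, u ∈ e → (φ e = some α ∨ φ e = some β) → e ∈ p.edges) ∧
  (∀ e ∈ G.edgeSet, v ∈ e → (φ e = some α ∨ φ e = some β) → e ∈ p.edges)

/-- Augmenting along the list of edges `es`: swap the colors `α` and `β` on `es`. -/
def augmentColoring {V : Type*} [DecidableEq V] (φ : Sym2 V → Option ℕ)
    (α β : ℕ) (es : List (Sym2 V)) : Sym2 V → Option ℕ :=
  fun e => if e ∈ es then
    (if φ e = some α then some β else if φ e = some β then some α else φ e)
  else φ e

/-!
Swapping `α` and `β` along the maximal path `p` from `w` keeps the coloring proper, because every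
edge colored `α` or `β` that touches `p` lies on `p`. Afterwards `α` is missing at `w` (where `β`
was) and at the one of `x`, `y` that is not the far end `z` of `p`: a vertex other than `w` at
which `α` is missing can lie on `p` only as its end. So that edge at `w` can be colored `α`.
-/

namespace SimpleGraph.Walk

variable {V : Type*} {G : SimpleGraph V}

lemma exists_rel_edges_of_mem_support {R : Sym2 V → Sym2 V → Prop} :
    ∀ {u z v : V} (p : G.Walk u z), p.edges.IsChain R → v ∈ p.support → v ≠ u → v ≠ z →
      ∃ e₁ ∈ p.edges, ∃ e₂ ∈ p.edges, v ∈ e₁ ∧ v ∈ e₂ ∧ R e₁ e₂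
  | _, _, _, .nil, _, hv, hvu, _ => (hvu (by simpa using hv)).elim
  | _, _, _, .cons _ .nil, _, hv, hvu, hvz => by simp_all
  | _, _, v, .cons (v := m) _ (.cons h q), hR, hv, hvu, hvz => by
    by_cases hvm : v = m
    · subst hvm
      exact ⟨_, by simp, _, by simp, Sym2.mem_mk_right _ _, Sym2.mem_mk_left _ _,
        (List.isChain_cons_cons.1 hR).1⟩
    · obtain ⟨e₁, he₁, e₂, he₂, h⟩ := exists_rel_edges_of_mem_support (.cons h q)
        (List.isChain_cons_cons.1 hR).2 (by simpa [hvu] using hv) hvm hvz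
      exact ⟨e₁, by simp_all, e₂, by simp_all, h⟩

end SimpleGraph.Walk

section

variable {V : Type*} [DecidableEq V] {G : SimpleGraph V} {C : Set ℕ}
  {φ : Sym2 V → Option ℕ} {α β : ℕ}

namespace IsMaxAltPath

variable {u z : V} {p : G.Walk u z}

lemma mem_edges_of_mem_support (hφ : IsProperPartialEC G C φ) (hp : IsMaxAltPath G φ α β p)
    {v : V} (hv : v ∈ p.support) {e : Sym2 V} (he : e ∈ G.edgeSet) (hve : v ∈ e)
    (hc : φ e = some α ∨ φ e = some β) : e ∈ p.edges := by
  obtain ⟨-, hcol, halt, hstart, hend⟩ := hp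
  by_cases hvu : v = u
  · exact hstart e he (hvu ▸ hve) hc
  by_cases hvz : v = z
  · exact hend e he (hvz ▸ hve) hc
  obtain ⟨e₁, he₁, e₂, he₂, hv₁, hv₂, hne⟩ :=
    p.exists_rel_edges_of_mem_support halt hv hvu hvz
  -- `φ e₁ ≠ φ e₂` both lie in `{α, β}`, so `φ e` is one of them
  have key : φ e = φ e₁ ∨ φ e = φ e₂ := by
    rcases hcol e₁ he₁ with h₁ | h₁ <;> rcases hcol e₂ he₂ with h₂ | h₂ <;>
      rcases hc with h | h <;> simp_all
  obtain ⟨c, hec⟩ : ∃ c, φ e = some c := hc.elim (⟨α, ·⟩) (⟨β, ·⟩)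
  by_contra hnot
  rcases key with h | h
  · exact hφ.2.2 e e₁ (by rintro rfl; exact hnot he₁) ⟨v, hve, hv₁⟩ c hec (h ▸ hec)
  · exact hφ.2.2 e e₂ (by rintro rfl; exact hnot he₂) ⟨v, hve, hv₂⟩ c hec (h ▸ hec)

lemma eq_of_mem_missingColors (hp : IsMaxAltPath G φ α β p) {v : V} (hv : v ∈ p.support)
    (hvu : v ≠ u) (hα : α ∈ missingColors G C φ v) : v = z := by
  by_contra hvz
  obtain ⟨e₁, he₁, e₂, he₂, hv₁, hv₂, hne⟩ :=
    p.exists_rel_edges_of_mem_support hp.2.2.1 hv hvu hvz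
  have hβ : ∀ e ∈ p.edges, v ∈ e → φ e = some β := fun e he hve =>
    (hp.2.1 e he).resolve_left (hα.2 e (p.edges_subset_edgeSet he) hve)
  exact hne ((hβ e₁ he₁ hv₁).trans (hβ e₂ he₂ hv₂).symm)

end IsMaxAltPath

section augmentColoring

variable {es : List (Sym2 V)} {e : Sym2 V}

lemma augmentColoring_of_notMem (he : e ∉ es) : augmentColoring φ α β es e = φ e := if_neg he

lemma augmentColoring_eq_some_of_mem (he : e ∈ es) {c : ℕ} :
    augmentColoring φ α β es e = some c ↔ φ e = some (Equiv.swap α β c) := by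
  simp only [augmentColoring, if_pos he]
  rcases φ e with _ | d
  · simp
  · have hswap : (if some d = some α then some β else if some d = some β then some α else some d)
        = some (Equiv.swap α β d) := by
      rw [Equiv.swap_apply_def]; split_ifs <;> simp_all
    rw [hswap, Option.some_inj, Option.some_inj, Equiv.swap_apply_eq_iff]

lemma augmentColoring_eq_none_iff : augmentColoring φ α β es e = none ↔ φ e = none := by
  unfold augmentColoring
  split_ifs <;> simp_all

end augmentColoring

section augmentation

variable {u z : V} {p : G.Walk u z}

theorem IsProperPartialEC.augment (hφ : IsProperPartialEC G C φ)
    (hp : IsMaxAltPath G φ α β p) (hαC : α ∈ C) (hβC : β ∈ C) :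
    IsProperPartialEC G C (augmentColoring φ α β p.edges) := by
  have hswapped :
      ∀ e ∈ p.edges, ∀ c, augmentColoring φ α β p.edges e = some c → c = α ∨ c = β := by
    intro e he c hc
    rw [augmentColoring_eq_some_of_mem he] at hc
    rcases hp.2.1 e he with h | h <;>
      rw [h, Option.some_inj, eq_comm, Equiv.swap_apply_eq_iff] at hc <;> simp [hc]
  -- an edge off `p` touching `p` and colored `α` or `β` would have been absorbed into `p`
  have hmixed : ∀ e₁ ∈ p.edges, ∀ e₂ ∉ p.edges, (∃ v, v ∈ e₁ ∧ v ∈ e₂) →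
      ∀ c, augmentColoring φ α β p.edges e₁ = some c → φ e₂ ≠ some c := by
    rintro e₁ he₁ e₂ he₂ ⟨v, hv₁, hv₂⟩ c hc hc₂
    refine he₂ (hp.mem_edges_of_mem_support hφ
      (p.mem_support_iff_exists_mem_edges.2 (.inr ⟨e₁, he₁, hv₁⟩)) (hφ.1 e₂ (by simp [hc₂])) hv₂ ?_)
    rcases hswapped e₁ he₁ c hc with rfl | rfl <;> simp [hc₂]
  refine ⟨fun e he => hφ.1 e (by rwa [Ne, augmentColoring_eq_none_iff] at he),
    fun e c hc => ?_, fun e₁ e₂ hne hshare c hc₁ hc₂ => ?_⟩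
  · by_cases he : e ∈ p.edges
    · rcases hswapped e he c hc with rfl | rfl
      exacts [hαC, hβC]
    · exact hφ.2.1 e c (by rwa [augmentColoring_of_notMem he] at hc)
  · by_cases he₁ : e₁ ∈ p.edges <;> by_cases he₂ : e₂ ∈ p.edges
    · rw [augmentColoring_eq_some_of_mem he₁] at hc₁
      rw [augmentColoring_eq_some_of_mem he₂] at hc₂
      exact hφ.2.2 e₁ e₂ hne hshare _ hc₁ hc₂
    · exact hmixed e₁ he₁ e₂ he₂ hshare c hc₁ (by rwa [augmentColoring_of_notMem he₂] at hc₂)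
    · exact hmixed e₂ he₂ e₁ he₁ (hshare.imp fun _ => And.symm) c hc₂
        (by rwa [augmentColoring_of_notMem he₁] at hc₁)
    · rw [augmentColoring_of_notMem he₁] at hc₁
      rw [augmentColoring_of_notMem he₂] at hc₂
      exact hφ.2.2 e₁ e₂ hne hshare c hc₁ hc₂

lemma IsMaxAltPath.mem_missingColors_augmentColoring_start (hp : IsMaxAltPath G φ α β p)
    (hαC : α ∈ C) (hβ : β ∈ missingColors G C φ u) :
    α ∈ missingColors G C (augmentColoring φ α β p.edges) u := by
  refine ⟨hαC, fun e he hue hαe => ?_⟩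
  by_cases hep : e ∈ p.edges
  · rw [augmentColoring_eq_some_of_mem hep, Equiv.swap_apply_left] at hαe
    exact hβ.2 e he hue hαe
  · rw [augmentColoring_of_notMem hep] at hαe
    exact hep (hp.2.2.2.1 e he hue (.inl hαe))

lemma IsMaxAltPath.mem_missingColors_augmentColoring_of_ne (hp : IsMaxAltPath G φ α β p)
    {v : V} (hvu : v ≠ u) (hvz : v ≠ z) (hα : α ∈ missingColors G C φ v) :
    α ∈ missingColors G C (augmentColoring φ α β p.edges) v := by
  refine ⟨hα.1, fun e he hve hαe => ?_⟩
  by_cases hep : e ∈ p.edges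
  · exact hvz (hp.eq_of_mem_missingColors
      (p.mem_support_iff_exists_mem_edges.2 (.inr ⟨e, hep, hve⟩)) hvu hα)
  · rw [augmentColoring_of_notMem hep] at hαe
    exact hα.2 e he hve hαe

end augmentation

theorem IsProperPartialEC.update_of_mem_missingColors (hφ : IsProperPartialEC G C φ)
    {u v : V} (huv : G.Adj u v) (hu : α ∈ missingColors G C φ u)
    (hv : α ∈ missingColors G C φ v) :
    IsProperPartialEC G C (Function.update φ s(u, v) (some α)) := by
  have hfree : ∀ e ≠ s(u, v), ∀ x ∈ s(u, v), x ∈ e → φ e ≠ some α := by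
    intro e _ x hx hxe hαe
    have he := hφ.1 e (by simp [hαe])
    rcases Sym2.mem_iff.1 hx with rfl | rfl
    exacts [hu.2 e he hxe hαe, hv.2 e he hxe hαe]
  refine ⟨fun e he => ?_, fun e c hc => ?_, fun e₁ e₂ hne hshare c hc₁ hc₂ => ?_⟩
  · by_cases h : e = s(u, v)
    · exact h ▸ huv
    · exact hφ.1 e (by rwa [Function.update_of_ne h] at he)
  · by_cases h : e = s(u, v)
    · rw [h, Function.update_self, Option.some_inj] at hc
      exact hc ▸ hu.1
    · exact hφ.2.1 e c (by rwa [Function.update_of_ne h] at hc)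
  · obtain ⟨x, hx₁, hx₂⟩ := hshare
    by_cases h₁ : e₁ = s(u, v) <;> by_cases h₂ : e₂ = s(u, v)
    · exact hne (h₁.trans h₂.symm)
    · rw [h₁, Function.update_self, Option.some_inj] at hc₁
      rw [Function.update_of_ne h₂, ← hc₁] at hc₂
      exact hfree e₂ h₂ x (h₁ ▸ hx₁) hx₂ hc₂
    · rw [h₂, Function.update_self, Option.some_inj] at hc₂
      rw [Function.update_of_ne h₁, ← hc₂] at hc₁
      exact hfree e₁ h₁ x (h₂ ▸ hx₂) hx₁ hc₁
    · rw [Function.update_of_ne h₁] at hc₁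
      rw [Function.update_of_ne h₂] at hc₂
      exact hφ.2.2 e₁ e₂ hne ⟨x, hx₁, hx₂⟩ c hc₁ hc₂

end

theorem subreverse_fan_repair_general {V : Type*} [DecidableEq V]
    (G : SimpleGraph V) (C : Set ℕ) (φ : Sym2 V → Option ℕ)
    (hφ : IsProperPartialEC G C φ)
    (α β : ℕ) (hαC : α ∈ C) (hβC : β ∈ C)
    (w x y : V) (hxy : x ≠ y) (hwx : G.Adj w x) (hwy : G.Adj w y)
    (hαx : α ∈ missingColors G C φ x) (hαy : α ∈ missingColors G C φ y)
    (hβw : β ∈ missingColors G C φ w)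
    (z : V) (p : G.Walk w z) (hp : IsMaxAltPath G φ α β p)
    (φ' : Sym2 V → Option ℕ)
    (hφ' : φ' = Function.update (augmentColoring φ α β p.edges)
      (if z = x then s(w, y) else s(w, x)) (some α)) :
    IsProperPartialEC G C φ' ∧
    {e : Sym2 V | φ' e ≠ none} =
      insert (if z = x then s(w, y) else s(w, x)) {e : Sym2 V | φ e ≠ none} ∧
    α ∉ missingColors G C φ' w := by
  obtain ⟨t, het, hwt, hαt, htz⟩ : ∃ t, (if z = x then s(w, y) else s(w, x)) = s(w, t) ∧
      G.Adj w t ∧ α ∈ missingColors G C φ t ∧ t ≠ z := by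
    by_cases hzx : z = x
    · exact ⟨y, if_pos hzx, hwy, hαy, hzx ▸ hxy.symm⟩
    · exact ⟨x, if_neg hzx, hwx, hαx, Ne.symm hzx⟩
  rw [het] at hφ' ⊢
  subst hφ'
  have hαw' := hp.mem_missingColors_augmentColoring_start hαC hβw
  have hαt' := hp.mem_missingColors_augmentColoring_of_ne hwt.ne.symm htz hαt
  refine ⟨(hφ.augment hp hαC hβC).update_of_mem_missingColors hwt hαw' hαt', ?_,
    fun hα => hα.2 _ hwt (Sym2.mem_mk_left _ _) (Function.update_self _ _ _)⟩
  ext e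
  by_cases h : e = s(w, t) <;> simp [h, Function.update_of_ne, augmentColoring_eq_none_iff]

/-- **Repair of a sub-reverse fan.** With `w x`, `w y` uncolored,
`α ∈ M(x) ∩ M(y)`, `α ∉ M(w)`, `β ∈ M(w)`, augment the maximal `αβ`-alternating
path `p` starting at `w` and then color `w x` with `α` if `p` does not end at `x`,
and `w y` with `α` otherwise.  The result is a proper partial coloring whose
colored edges are those of `φ` together with exactly one of `w x`, `w y`, and in
which `α` is not missing at `w`. -/
theorem subreverse_fan_repair {V : Type*} [Fintype V] [DecidableEq V]
    (G : SimpleGraph V) (C : Set ℕ) (φ : Sym2 V → Option ℕ)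
    (hφ : IsProperPartialEC G C φ)
    (α β : ℕ) (hαβ : α ≠ β) (hαC : α ∈ C) (hβC : β ∈ C)
    (w x y : V) (hxy : x ≠ y) (hwx : G.Adj w x) (hwy : G.Adj w y)
    (huwx : φ s(w, x) = none) (huwy : φ s(w, y) = none)
    (hαx : α ∈ missingColors G C φ x) (hαy : α ∈ missingColors G C φ y)
    (hαw : α ∉ missingColors G C φ w) (hβw : β ∈ missingColors G C φ w)
    (z : V) (p : G.Walk w z) (hp : IsMaxAltPath G φ α β p)
    (φ' : Sym2 V → Option ℕ)
    (hφ' : φ' = Function.update (augmentColoring φ α β p.edges)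
      (if z = x then s(w, y) else s(w, x)) (some α)) :
    IsProperPartialEC G C φ' ∧
    {e : Sym2 V | φ' e ≠ none} =
      insert (if z = x then s(w, y) else s(w, x)) {e : Sym2 V | φ e ≠ none} ∧
    α ∉ missingColors G C φ' w :=
  subreverse_fan_repair_general G C φ hφ α β hαC hβC w x y hxy hwx hwy hαx hαy hβw z p hp φ' hφ'
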